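/- (Proposition 2) Let α ∈ (0,1/2). For every i ∈ {1,…,p−1} such that ξ_{K_{σ(i)}} = ξ_{K_{σ(i+1)}}, the sequence n^α ( ξ̂_{K_{σ(i)}}^{(n)} − ξ̂_{K_{σ(i+1)}}^{(n)} ) converges to 0 in probability as n → +∞. -/

import Mathlib

open MeasureTheory Filter Finset ProbabilityTheory Matrix

noncomputable section

namespace ArxivStmt

variable {Ω : Type} [MeasurableSpace Ω]

/-- The rank-one operator `u ⊗ v : h ↦ ⟨u, h⟩ v` on `ℝ^p`, as a matrix. -/
def tensor {p : ℕ} (u v : Fin p → ℝ) : Matrix (Fin p) (Fin p) ℝ :=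
  Matrix.of fun i j => v i * u j

/-- The coordinate projection `A_K : ℝ^p → ℝ^{card K}`, `x ↦ (x_i)_{i ∈ K}`, as a matrix. -/
def AK {p : ℕ} (K : Finset (Fin p)) : Matrix {x // x ∈ K} (Fin p) ℝ :=
  Matrix.of fun k j => if (k : Fin p) = j then 1 else 0

/-- `Q_{K} = A_K^* (A_K V A_K^*)⁻¹ A_K`. -/
def QK {p : ℕ} (K : Finset (Fin p)) (V : Matrix (Fin p) (Fin p) ℝ) : Matrix (Fin p) (Fin p) ℝ :=
  (AK K)ᵀ * (AK K * V * (AK K)ᵀ)⁻¹ * AK K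

/-- Squared euclidean norm on `ℝ^p`. -/
def esq {p : ℕ} (v : Fin p → ℝ) : ℝ := ∑ i, v i ^ 2

/-- `K_i = I ∖ {i}`. -/
def Kc {p : ℕ} (i : Fin p) : Finset (Fin p) := Finset.univ.erase i

/-- `p_m = P(U = m)`. -/
def pU {M : ℕ} (P : Measure Ω) (U : Ω → Fin M) (m : Fin M) : ℝ := (P {ω | U ω = m}).toReal

/-- `P(Z = ℓ, U = m)`. -/
def pZU {M q : ℕ} (P : Measure Ω) (U : Ω → Fin M) (Z : Ω → Fin q) (l : Fin q) (m : Fin M) : ℝ :=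
  (P {ω | Z ω = l ∧ U ω = m}).toReal

/-- `p_{ℓ|m} = P(Z = ℓ | U = m)`. -/
def pcond {M q : ℕ} (P : Measure Ω) (U : Ω → Fin M) (Z : Ω → Fin q) (l : Fin q) (m : Fin M) : ℝ :=
  pZU P U Z l m / pU P U m

/-- `μ_m = E(1_{U=m} X) / p_m`. -/
def muU {p M : ℕ} (P : Measure Ω) (X : Ω → Fin p → ℝ) (U : Ω → Fin M) (m : Fin M) :
    Fin p → ℝ :=
  fun i => (pU P U m)⁻¹ * ∫ ω, (if U ω = m then X ω i else 0) ∂P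

/-- `μ_{ℓ,m} = E(1_{Z=ℓ,U=m} X) / P(Z=ℓ,U=m)`. -/
def muZU {p M q : ℕ} (P : Measure Ω) (X : Ω → Fin p → ℝ) (U : Ω → Fin M) (Z : Ω → Fin q)
    (l : Fin q) (m : Fin M) : Fin p → ℝ :=
  fun i => (pZU P U Z l m)⁻¹ * ∫ ω, (if Z ω = l ∧ U ω = m then X ω i else 0) ∂P

/-- `V_m = E(1_{U=m} (X - μ_m) ⊗ (X - μ_m)) / p_m`. -/
def VU {p M : ℕ} (P : Measure Ω) (X : Ω → Fin p → ℝ) (U : Ω → Fin M) (m : Fin M) :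
    Matrix (Fin p) (Fin p) ℝ :=
  Matrix.of fun i j => (pU P U m)⁻¹ *
    ∫ ω, (if U ω = m then (X ω i - muU P X U m i) * (X ω j - muU P X U m j) else 0) ∂P

/-- `ξ_{K|m} = Σ_ℓ p_{ℓ|m}² ‖(I - V_m Q_{K|m})(μ_{ℓ,m} - μ_m)‖²`. -/
def xiKm {p M q : ℕ} (P : Measure Ω) (X : Ω → Fin p → ℝ) (U : Ω → Fin M) (Z : Ω → Fin q)
    (K : Finset (Fin p)) (m : Fin M) : ℝ :=
  ∑ l : Fin q, pcond P U Z l m ^ 2 *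
    esq ((1 - VU P X U m * QK K (VU P X U m)) *ᵥ (muZU P X U Z l m - muU P X U m))

/-- `ξ_K = Σ_m p_m² ξ_{K|m}`. -/
def xiK {p M q : ℕ} (P : Measure Ω) (X : Ω → Fin p → ℝ) (U : Ω → Fin M) (Z : Ω → Fin q)
    (K : Finset (Fin p)) : ℝ :=
  ∑ m : Fin M, pU P U m ^ 2 * xiKm P X U Z K m

/-! Empirical (sample) quantities. -/

/-- `N̂_m^{(n)}`. -/
def NU {M : ℕ} (Us : ℕ → Ω → Fin M) (m : Fin M) (n : ℕ) (ω : Ω) : ℝ :=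
  ∑ i ∈ Finset.range n, if Us i ω = m then 1 else 0

/-- `N̂_{ℓ,m}^{(n)}`. -/
def NZU {M q : ℕ} (Us : ℕ → Ω → Fin M) (Zs : ℕ → Ω → Fin q) (l : Fin q) (m : Fin M)
    (n : ℕ) (ω : Ω) : ℝ :=
  ∑ i ∈ Finset.range n, if Zs i ω = l ∧ Us i ω = m then 1 else 0

/-- `p̂_m^{(n)} = N̂_m^{(n)} / n`. -/
def pUhat {M : ℕ} (Us : ℕ → Ω → Fin M) (m : Fin M) (n : ℕ) (ω : Ω) : ℝ :=
  NU Us m n ω / n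

/-- `p̂_{ℓ|m}^{(n)} = N̂_{ℓ,m}^{(n)} / N̂_m^{(n)}`. -/
def pcondhat {M q : ℕ} (Us : ℕ → Ω → Fin M) (Zs : ℕ → Ω → Fin q) (l : Fin q) (m : Fin M)
    (n : ℕ) (ω : Ω) : ℝ :=
  NZU Us Zs l m n ω / NU Us m n ω

/-- `μ̂_m^{(n)}`. -/
def muUhat {p M : ℕ} (Xs : ℕ → Ω → Fin p → ℝ) (Us : ℕ → Ω → Fin M) (m : Fin M)
    (n : ℕ) (ω : Ω) : Fin p → ℝ :=
  fun j => (NU Us m n ω)⁻¹ * ∑ i ∈ Finset.range n, if Us i ω = m then Xs i ω j else 0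

/-- `μ̂_{ℓ,m}^{(n)}`. -/
def muZUhat {p M q : ℕ} (Xs : ℕ → Ω → Fin p → ℝ) (Us : ℕ → Ω → Fin M) (Zs : ℕ → Ω → Fin q)
    (l : Fin q) (m : Fin M) (n : ℕ) (ω : Ω) : Fin p → ℝ :=
  fun j => (NZU Us Zs l m n ω)⁻¹ *
    ∑ i ∈ Finset.range n, if Zs i ω = l ∧ Us i ω = m then Xs i ω j else 0

/-- `V̂_m^{(n)}`. -/
def VUhat {p M : ℕ} (Xs : ℕ → Ω → Fin p → ℝ) (Us : ℕ → Ω → Fin M) (m : Fin M)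
    (n : ℕ) (ω : Ω) : Matrix (Fin p) (Fin p) ℝ :=
  Matrix.of fun a b => (NU Us m n ω)⁻¹ * ∑ i ∈ Finset.range n,
    if Us i ω = m then
      (Xs i ω a - muUhat Xs Us m n ω a) * (Xs i ω b - muUhat Xs Us m n ω b) else 0

/-- `ξ̂_{K|m}^{(n)}`. -/
def xiKmhat {p M q : ℕ} (Xs : ℕ → Ω → Fin p → ℝ) (Us : ℕ → Ω → Fin M) (Zs : ℕ → Ω → Fin q)
    (K : Finset (Fin p)) (m : Fin M) (n : ℕ) (ω : Ω) : ℝ :=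
  ∑ l : Fin q, pcondhat Us Zs l m n ω ^ 2 *
    esq ((1 - VUhat Xs Us m n ω * QK K (VUhat Xs Us m n ω)) *ᵥ
      (muZUhat Xs Us Zs l m n ω - muUhat Xs Us m n ω))

/-- `ξ̂_K^{(n)}`. -/
def xiKhat {p M q : ℕ} (Xs : ℕ → Ω → Fin p → ℝ) (Us : ℕ → Ω → Fin M) (Zs : ℕ → Ω → Fin q)
    (K : Finset (Fin p)) (n : ℕ) (ω : Ω) : ℝ :=
  ∑ m : Fin M, pUhat Us m n ω ^ 2 * xiKmhat Xs Us Zs K m n ω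

/-- i.i.d. sample with the distribution of `(X, U, Z)`. -/
def IsIIDSample {p M q : ℕ} (P : Measure Ω) (X : Ω → Fin p → ℝ) (U : Ω → Fin M)
    (Z : Ω → Fin q) (Xs : ℕ → Ω → Fin p → ℝ) (Us : ℕ → Ω → Fin M) (Zs : ℕ → Ω → Fin q) :
    Prop :=
  (∀ i, Measurable fun ω => (Xs i ω, Us i ω, Zs i ω)) ∧
  iIndepFun (fun i ω => (Xs i ω, Us i ω, Zs i ω)) P ∧
  ∀ i, IdentDistrib (fun ω => (Xs i ω, Us i ω, Zs i ω)) (fun ω => (X ω, U ω, Z ω)) P P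

/-- i.i.d. sample with the distribution of `(X, U)`. -/
def IsIIDSample2 {p M : ℕ} (P : Measure Ω) (X : Ω → Fin p → ℝ) (U : Ω → Fin M)
    (Xs : ℕ → Ω → Fin p → ℝ) (Us : ℕ → Ω → Fin M) : Prop :=
  (∀ i, Measurable fun ω => (Xs i ω, Us i ω)) ∧
  iIndepFun (fun i ω => (Xs i ω, Us i ω)) P ∧
  ∀ i, IdentDistrib (fun ω => (Xs i ω, Us i ω)) (fun ω => (X ω, U ω)) P P

/-! Every ingredient of `ξ̂_K` (class frequencies, conditional means and covariances) is a ratio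
of empirical averages of an i.i.d. sample with finite variance, so by Chebyshev's inequality it
deviates from its population value by `o_P(n ^ (-β))` for every `β < 1 / 2`. This rate survives
sums, products and inverses at nonzero limits (hence matrix inversion at an invertible limit, via
the adjugate), so `ξ̂_K = ξ_K + o_P(n ^ (-α))`, and the two errors are all that remains of
`ξ̂_{K_{σ(i)}} - ξ̂_{K_{σ(i+1)}}` when `ξ_{K_{σ(i)}} = ξ_{K_{σ(i+1)}}`. -/

open Topology

section InProbability

variable {P : Measure Ω}

theorem tendstoInMeasure_zero_iff_abs {f : ℕ → Ω → ℝ} :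
    TendstoInMeasure P f atTop (fun _ => 0) ↔
      ∀ ε > 0, Tendsto (fun n => P {ω | ε ≤ |f n ω|}) atTop (𝓝 0) := by
  simp [tendstoInMeasure_iff_dist]

theorem tendstoInMeasure_zero_of_cover {f g h : ℕ → Ω → ℝ}
    (hf : TendstoInMeasure P f atTop (fun _ => 0)) (hg : TendstoInMeasure P g atTop (fun _ => 0))
    (hcover : ∀ ε > 0, ∃ δ > 0,
      ∀ᶠ n in atTop, ∀ ω, ε ≤ |h n ω| → δ ≤ |f n ω| ∨ δ ≤ |g n ω|) :
    TendstoInMeasure P h atTop (fun _ => 0) := by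
  rw [tendstoInMeasure_zero_iff_abs] at hf hg ⊢
  intro ε hε
  obtain ⟨δ, hδ, hcov⟩ := hcover ε hε
  refine tendsto_of_tendsto_of_tendsto_of_le_of_le' tendsto_const_nhds
    (by simpa using (hf δ hδ).add (hg δ hδ)) (Eventually.of_forall fun n => zero_le) ?_
  filter_upwards [hcov] with n hn
  exact (measure_mono fun ω hω => hn ω hω).trans (measure_union_le _ _)

theorem tendstoInMeasure_zero_of_abs_le {f g : ℕ → Ω → ℝ}
    (hg : TendstoInMeasure P g atTop (fun _ => 0)) (hle : ∀ᶠ n in atTop, ∀ ω, |f n ω| ≤ |g n ω|) :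
    TendstoInMeasure P f atTop (fun _ => 0) :=
  tendstoInMeasure_zero_of_cover hg hg fun ε hε =>
    ⟨ε, hε, by filter_upwards [hle] with n hn ω hω using Or.inl (hω.trans (hn ω))⟩

theorem tendstoInMeasure_zero_add {f g : ℕ → Ω → ℝ}
    (hf : TendstoInMeasure P f atTop (fun _ => 0)) (hg : TendstoInMeasure P g atTop (fun _ => 0)) :
    TendstoInMeasure P (fun n ω => f n ω + g n ω) atTop (fun _ => 0) := by
  refine tendstoInMeasure_zero_of_cover hf hg fun ε hε =>
    ⟨ε / 2, by positivity, Eventually.of_forall fun n ω hω => ?_⟩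
  by_contra! h
  linarith [abs_add_le (f n ω) (g n ω)]

theorem tendstoInMeasure_zero_mul {f g : ℕ → Ω → ℝ}
    (hf : TendstoInMeasure P f atTop (fun _ => 0)) (hg : TendstoInMeasure P g atTop (fun _ => 0)) :
    TendstoInMeasure P (fun n ω => f n ω * g n ω) atTop (fun _ => 0) := by
  refine tendstoInMeasure_zero_of_cover hf hg fun ε hε =>
    ⟨√ε, by positivity, Eventually.of_forall fun n ω hω => ?_⟩
  by_contra! h
  have : |f n ω| * |g n ω| < √ε * √ε := mul_lt_mul'' h.1 h.2 (abs_nonneg _) (abs_nonneg _)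
  rw [Real.mul_self_sqrt hε.le, ← abs_mul] at this
  linarith

theorem tendstoInMeasure_zero_const_mul {f : ℕ → Ω → ℝ}
    (hf : TendstoInMeasure P f atTop (fun _ => 0)) (c : ℝ) :
    TendstoInMeasure P (fun n ω => c * f n ω) atTop (fun _ => 0) := by
  refine tendstoInMeasure_zero_of_cover hf hf fun ε hε =>
    ⟨ε / (|c| + 1), by positivity, Eventually.of_forall fun n ω hω => Or.inl ?_⟩
  rw [div_le_iff₀ (by positivity)]
  rw [abs_mul] at hω
  nlinarith [abs_nonneg (f n ω), abs_nonneg c]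

end InProbability

/-- `f n = c + o_P(n ^ (-β))` for every `β < 1 / 2`. -/
def SubrootConsistent (P : Measure Ω) (f : ℕ → Ω → ℝ) (c : ℝ) : Prop :=
  ∀ β < (1 / 2 : ℝ),
    TendstoInMeasure P (fun (n : ℕ) ω => (n : ℝ) ^ β * (f n ω - c)) atTop (fun _ => 0)

namespace SubrootConsistent

variable {P : Measure Ω} {f g : ℕ → Ω → ℝ} {a b : ℝ}

theorem congr (hf : SubrootConsistent P f a) (hfg : ∀ᶠ n in atTop, ∀ ω, f n ω = g n ω)
    (hab : a = b) : SubrootConsistent P g b := fun β hβ =>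
  tendstoInMeasure_zero_of_abs_le (hf β hβ) (by filter_upwards [hfg] with n hn ω; rw [hn, hab])

theorem tendstoInMeasure_sub (hf : SubrootConsistent P f a) :
    TendstoInMeasure P (fun n ω => f n ω - a) atTop (fun _ => 0) := by
  simpa using hf 0 (by norm_num)

theorem const (P : Measure Ω) (c : ℝ) : SubrootConsistent P (fun _ _ => c) c := by
  intro β _
  rw [tendstoInMeasure_zero_iff_abs]
  intro ε hε
  simp [hε.not_ge]

theorem add (hf : SubrootConsistent P f a) (hg : SubrootConsistent P g b) :
    SubrootConsistent P (fun n ω => f n ω + g n ω) (a + b) := fun β hβ => by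
  simpa [mul_add, add_sub_add_comm] using tendstoInMeasure_zero_add (hf β hβ) (hg β hβ)

theorem mul (hf : SubrootConsistent P f a) (hg : SubrootConsistent P g b) :
    SubrootConsistent P (fun n ω => f n ω * g n ω) (a * b) := fun β hβ => by
  -- `f g - a b = (f - a) (g - b) + b (f - a) + a (g - b)`
  have h := tendstoInMeasure_zero_add
    (tendstoInMeasure_zero_add (tendstoInMeasure_zero_mul (hf β hβ) hg.tendstoInMeasure_sub)
      (tendstoInMeasure_zero_const_mul (hf β hβ) b))
    (tendstoInMeasure_zero_const_mul (hg β hβ) a)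
  convert h using 3 with n ω
  ring

theorem const_mul (hf : SubrootConsistent P f a) (c : ℝ) :
    SubrootConsistent P (fun n ω => c * f n ω) (c * a) :=
  (const P c).mul hf

theorem sub (hf : SubrootConsistent P f a) (hg : SubrootConsistent P g b) :
    SubrootConsistent P (fun n ω => f n ω - g n ω) (a - b) :=
  (hf.add (hg.const_mul (-1))).congr (.of_forall fun n ω => by ring) (by ring)

theorem pow (hf : SubrootConsistent P f a) (k : ℕ) :
    SubrootConsistent P (fun n ω => f n ω ^ k) (a ^ k) := by
  induction k with
  | zero => simpa using const P 1
  | succ k ih => simpa [pow_succ] using ih.mul hf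

theorem inv (hf : SubrootConsistent P f a) (ha : a ≠ 0) :
    SubrootConsistent P (fun n ω => (f n ω)⁻¹) a⁻¹ := by
  intro β hβ
  have ha' : 0 < |a| := abs_pos.2 ha
  refine tendstoInMeasure_zero_of_cover hf.tendstoInMeasure_sub (hf β hβ) fun ε hε =>
    ⟨min (|a| / 2) (ε * |a| ^ 2 / 2), by positivity, Eventually.of_forall fun n ω hω => ?_⟩
  by_contra! h
  obtain ⟨hclose, hsmall⟩ := h
  -- near `a`, `x ↦ x⁻¹` is `2 / a ^ 2`-Lipschitz
  have hfa : |a| / 2 ≤ |f n ω| := by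
    have := abs_sub_abs_le_abs_sub a (f n ω)
    rw [abs_sub_comm] at this
    linarith [min_le_left (|a| / 2) (ε * |a| ^ 2 / 2)]
  have hf0 : f n ω ≠ 0 := abs_pos.1 (lt_of_lt_of_le (by positivity) hfa)
  have hinv : |(f n ω)⁻¹ - a⁻¹| = |f n ω - a| / (|f n ω| * |a|) := by
    rw [inv_sub_inv hf0 ha, abs_div, abs_mul, abs_sub_comm]
  have hnβ : 0 ≤ (n : ℝ) ^ β := by positivity
  have key : |(n : ℝ) ^ β * ((f n ω)⁻¹ - a⁻¹)| ≤
      |(n : ℝ) ^ β * (f n ω - a)| * 2 / |a| ^ 2 := by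
    rw [abs_mul, abs_mul, abs_of_nonneg hnβ, hinv]
    calc (n : ℝ) ^ β * (|f n ω - a| / (|f n ω| * |a|))
        ≤ (n : ℝ) ^ β * (|f n ω - a| / (|a| / 2 * |a|)) := by gcongr
      _ = (n : ℝ) ^ β * |f n ω - a| * 2 / |a| ^ 2 := by field_simp
  have : |(n : ℝ) ^ β * (f n ω - a)| * 2 / |a| ^ 2 < ε := by
    rw [div_lt_iff₀ (by positivity)]
    linarith [min_le_right (|a| / 2) (ε * |a| ^ 2 / 2)]
  linarith

theorem div (hf : SubrootConsistent P f a) (hg : SubrootConsistent P g b) (hb : b ≠ 0) :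
    SubrootConsistent P (fun n ω => f n ω / g n ω) (a / b) :=
  hf.mul (hg.inv hb)

theorem sum {ι : Type*} (s : Finset ι) {f : ι → ℕ → Ω → ℝ} {a : ι → ℝ}
    (h : ∀ k ∈ s, SubrootConsistent P (f k) (a k)) :
    SubrootConsistent P (fun n ω => ∑ k ∈ s, f k n ω) (∑ k ∈ s, a k) := by
  induction s using Finset.cons_induction with
  | empty => simpa using const P 0
  | cons k s hk ih =>
    simp only [Finset.sum_cons]
    exact (h k (mem_cons_self k s)).add (ih fun k' hk' => h k' (mem_cons_of_mem hk'))

theorem prod {ι : Type*} (s : Finset ι) {f : ι → ℕ → Ω → ℝ} {a : ι → ℝ}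
    (h : ∀ k ∈ s, SubrootConsistent P (f k) (a k)) :
    SubrootConsistent P (fun n ω => ∏ k ∈ s, f k n ω) (∏ k ∈ s, a k) := by
  induction s using Finset.cons_induction with
  | empty => simpa using const P 1
  | cons k s hk ih =>
    simp only [Finset.prod_cons]
    exact (h k (mem_cons_self k s)).mul (ih fun k' hk' => h k' (mem_cons_of_mem hk'))

end SubrootConsistent

def MatrixSubrootConsistent {ι κ : Type*} (P : Measure Ω) (F : ℕ → Ω → Matrix ι κ ℝ)
    (C : Matrix ι κ ℝ) : Prop :=
  ∀ i j, SubrootConsistent P (fun n ω => F n ω i j) (C i j)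

namespace MatrixSubrootConsistent

variable {ι κ τ : Type*} {P : Measure Ω}

theorem const (P : Measure Ω) (C : Matrix ι κ ℝ) : MatrixSubrootConsistent P (fun _ _ => C) C :=
  fun i j => SubrootConsistent.const P (C i j)

theorem sub {F G : ℕ → Ω → Matrix ι κ ℝ} {C D : Matrix ι κ ℝ}
    (hF : MatrixSubrootConsistent P F C) (hG : MatrixSubrootConsistent P G D) :
    MatrixSubrootConsistent P (fun n ω => F n ω - G n ω) (C - D) :=
  fun i j => (hF i j).sub (hG i j)

theorem mul [Fintype κ] {F : ℕ → Ω → Matrix ι κ ℝ} {G : ℕ → Ω → Matrix κ τ ℝ}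
    {C : Matrix ι κ ℝ} {D : Matrix κ τ ℝ}
    (hF : MatrixSubrootConsistent P F C) (hG : MatrixSubrootConsistent P G D) :
    MatrixSubrootConsistent P (fun n ω => F n ω * G n ω) (C * D) :=
  fun i j => SubrootConsistent.sum _ fun k _ => (hF i k).mul (hG k j)

theorem mulVec [Fintype κ] {F : ℕ → Ω → Matrix ι κ ℝ} {v : ℕ → Ω → κ → ℝ} {C : Matrix ι κ ℝ}
    {w : κ → ℝ} (hF : MatrixSubrootConsistent P F C)
    (hv : ∀ k, SubrootConsistent P (fun n ω => v n ω k) (w k)) (i : ι) :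
    SubrootConsistent P (fun n ω => (F n ω *ᵥ v n ω) i) ((C *ᵥ w) i) :=
  SubrootConsistent.sum _ fun k _ => (hF i k).mul (hv k)

variable [Fintype ι] [DecidableEq ι]

theorem det {F : ℕ → Ω → Matrix ι ι ℝ} {C : Matrix ι ι ℝ} (hF : MatrixSubrootConsistent P F C) :
    SubrootConsistent P (fun n ω => (F n ω).det) C.det := by
  simp only [Matrix.det_apply']
  exact SubrootConsistent.sum _ fun σ _ =>
    (SubrootConsistent.prod _ fun i _ => hF (σ i) i).const_mul _

theorem adjugate {F : ℕ → Ω → Matrix ι ι ℝ} {C : Matrix ι ι ℝ}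
    (hF : MatrixSubrootConsistent P F C) :
    MatrixSubrootConsistent P (fun n ω => (F n ω).adjugate) C.adjugate := by
  intro i j
  simp only [Matrix.adjugate_apply]
  refine det fun a b => ?_
  by_cases hab : a = j
  · simpa [Matrix.updateRow_apply, hab] using SubrootConsistent.const P _
  · simpa [Matrix.updateRow_apply, hab] using hF a b

theorem inv {F : ℕ → Ω → Matrix ι ι ℝ} {C : Matrix ι ι ℝ} (hF : MatrixSubrootConsistent P F C)
    (hC : C.det ≠ 0) : MatrixSubrootConsistent P (fun n ω => (F n ω)⁻¹) C⁻¹ := by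
  intro i j
  simp only [Matrix.inv_def, Ring.inverse_eq_inv, Matrix.smul_apply, smul_eq_mul]
  exact (hF.det.inv hC).mul (hF.adjugate i j)

end MatrixSubrootConsistent

theorem AK_mul_transpose {p : ℕ} (K : Finset (Fin p)) : AK K * (AK K)ᵀ = 1 := by
  ext k k'
  simp only [Matrix.mul_apply, AK, Matrix.transpose_apply, Matrix.of_apply, mul_ite, mul_one,
    mul_zero, Finset.sum_ite_eq, mem_univ, if_true, Matrix.one_apply, Subtype.coe_inj]

theorem posDef_AK_mul_mul_transpose {p : ℕ} {V : Matrix (Fin p) (Fin p) ℝ} (hV : V.PosDef)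
    (K : Finset (Fin p)) : (AK K * V * (AK K)ᵀ).PosDef := by
  have hinj : Function.Injective (AK K).vecMul := fun x y hxy => by
    simpa [Matrix.vecMul_vecMul, AK_mul_transpose] using congrArg (· ᵥ* (AK K)ᵀ) hxy
  simpa using hV.mul_mul_conjTranspose_same hinj

theorem MatrixSubrootConsistent.QK {p : ℕ} {P : Measure Ω}
    {F : ℕ → Ω → Matrix (Fin p) (Fin p) ℝ} {V : Matrix (Fin p) (Fin p) ℝ}
    (hF : MatrixSubrootConsistent P F V) (K : Finset (Fin p))
    (hV : (AK K * V * (AK K)ᵀ).det ≠ 0) :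
    MatrixSubrootConsistent P (fun n ω => QK K (F n ω)) (QK K V) :=
  ((const P _).mul ((((const P _).mul hF).mul (const P _)).inv hV)).mul (const P _)

theorem subrootConsistent_average_of_identDistrib {P : Measure Ω} [IsProbabilityMeasure P]
    {W : ℕ → Ω → ℝ}
    (hindep : Pairwise fun i j => IndepFun (W i) (W j) P)
    (hident : ∀ i, IdentDistrib (W i) (W 0) P P) (hL2 : MemLp (W 0) 2 P) :
    SubrootConsistent P (fun n ω => (n : ℝ)⁻¹ * ∑ i ∈ range n, W i ω) P[W 0] := by
  intro β hβ
  rw [tendstoInMeasure_zero_iff_abs]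
  intro ε hε
  have hL2i : ∀ i, MemLp (W i) 2 P := fun i => (hident i).memLp_iff.2 hL2
  -- Chebyshev for `Y = n ^ β * (n⁻¹ * ∑ W i)`, whose variance is `n ^ (2β - 1) * Var[W 0]`
  have hcheb : ∀ n : ℕ, 1 ≤ n →
      P {ω | ε ≤ |(n : ℝ) ^ β * ((n : ℝ)⁻¹ * ∑ i ∈ range n, W i ω - P[W 0])|} ≤
        ENNReal.ofReal ((n : ℝ) ^ (2 * β - 1) * Var[W 0; P] / ε ^ 2) := by
    intro n hn
    have hn0 : (0 : ℝ) < n := by exact_mod_cast hn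
    set Y : Ω → ℝ := fun ω => ((n : ℝ) ^ β * (n : ℝ)⁻¹) * (∑ i ∈ range n, W i) ω with hY
    have hYL2 : MemLp Y 2 P := (memLp_finsetSum' _ fun i _ => hL2i i).const_mul _
    have hEY : P[Y] = (n : ℝ) ^ β * P[W 0] := by
      simp only [hY, Finset.sum_apply, integral_const_mul]
      rw [integral_finsetSum _ fun i _ => (hL2i i).integrable one_le_two]
      simp only [fun i => (hident i).integral_eq, sum_const, card_range, nsmul_eq_mul]
      field_simp
    have hVarY : Var[Y; P] = (n : ℝ) ^ (2 * β - 1) * Var[W 0; P] := by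
      rw [hY, variance_const_mul, IndepFun.variance_sum (fun i _ => hL2i i)
        (fun i _ j _ hij => hindep hij)]
      simp only [fun i => (hident i).variance_eq, sum_const, card_range, nsmul_eq_mul]
      rw [mul_pow, ← Real.rpow_natCast ((n : ℝ) ^ β), ← Real.rpow_mul hn0.le,
        Real.rpow_sub hn0, Real.rpow_one]
      field_simp
      norm_num [mul_comm]
    calc _ ≤ P {ω | ε ≤ |Y ω - P[Y]|} := by
          refine measure_mono fun ω hω => ?_
          simp only [Set.mem_ofPred_eq] at hω ⊢
          rw [hEY]
          simp only [hY, Finset.sum_apply]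
          convert hω using 2
          ring
      _ ≤ _ := by rw [← hVarY]; exact meas_ge_le_variance_div_sq hYL2 hε
  have hrate : Tendsto (fun n : ℕ => (n : ℝ) ^ (2 * β - 1) * Var[W 0; P] / ε ^ 2) atTop (𝓝 0) := by
    have := ((tendsto_rpow_neg_atTop (y := 1 - 2 * β) (by linarith)).comp
      tendsto_natCast_atTop_atTop).mul_const (Var[W 0; P] / ε ^ 2)
    simpa [Function.comp_def, mul_div_assoc] using this
  refine tendsto_of_tendsto_of_tendsto_of_le_of_le' tendsto_const_nhds
    (by simpa using ENNReal.tendsto_ofReal hrate) (Eventually.of_forall fun n => zero_le) ?_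
  filter_upwards [eventually_ge_atTop 1] with n hn using hcheb n hn

theorem ite_mul_sub_mul_sub (c : Prop) [Decidable c] (x y α β : ℝ) :
    (if c then (x - α) * (y - β) else 0) =
      (if c then x * y else 0) - α * (if c then y else 0) - β * (if c then x else 0) +
        α * β * (if c then 1 else 0) := by
  split_ifs <;> ring

theorem integral_ite_mul_sub_mul_sub {P : Measure Ω} {c : Ω → Prop} [DecidablePred c]
    {x y : Ω → ℝ} (α β : ℝ) (hxy : Integrable (fun ω => if c ω then x ω * y ω else 0) P)
    (hx : Integrable (fun ω => if c ω then x ω else 0) P)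
    (hy : Integrable (fun ω => if c ω then y ω else 0) P)
    (h1 : Integrable (fun ω => if c ω then (1 : ℝ) else 0) P) :
    ∫ ω, (if c ω then (x ω - α) * (y ω - β) else 0) ∂P =
      (∫ ω, if c ω then x ω * y ω else 0 ∂P) - α * (∫ ω, if c ω then y ω else 0 ∂P) -
        β * (∫ ω, if c ω then x ω else 0 ∂P) + α * β * ∫ ω, if c ω then (1 : ℝ) else 0 ∂P := by
  simp_rw [ite_mul_sub_mul_sub]
  rw [integral_add ?_ (h1.const_mul _), integral_sub ?_ (hx.const_mul β),
    integral_sub hxy (hy.const_mul α), integral_const_mul, integral_const_mul, integral_const_mul]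
  · exact hxy.sub (hy.const_mul α)
  · exact (hxy.sub (hy.const_mul α)).sub (hx.const_mul β)

theorem abs_one_le_one_add_sum_sq {p : ℕ} (x : Fin p → ℝ) : |(1 : ℝ)| ≤ 1 + ∑ k, x k ^ 2 := by
  simpa using sum_nonneg fun k _ => sq_nonneg (x k)

theorem abs_apply_le_one_add_sum_sq {p : ℕ} (x : Fin p → ℝ) (a : Fin p) :
    |x a| ≤ 1 + ∑ k, x k ^ 2 := by
  have := single_le_sum (fun k _ => sq_nonneg (x k)) (mem_univ a)
  nlinarith [sq_abs (x a), abs_nonneg (x a)]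

theorem abs_mul_apply_le_one_add_sum_sq {p : ℕ} (x : Fin p → ℝ) (a b : Fin p) :
    |x a * x b| ≤ 1 + ∑ k, x k ^ 2 := by
  rcases eq_or_ne a b with rfl | hab
  · rw [abs_mul_self, ← sq]
    linarith [single_le_sum (fun k _ => sq_nonneg (x k)) (mem_univ a)]
  · have := sum_le_sum_of_subset_of_nonneg (subset_univ {a, b}) fun k _ _ => sq_nonneg (x k)
    rw [sum_pair hab] at this
    nlinarith [sq_abs (x a), sq_abs (x b), abs_mul (x a) (x b), sq_nonneg (|x a| - |x b|)]

theorem measurable_ite_snd {α β : Type*} [MeasurableSpace α] [MeasurableSpace β]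
    [DiscreteMeasurableSpace β] (c : β → Prop) [DecidablePred c] {g : α → ℝ}
    (hg : Measurable g) : Measurable fun t : α × β => if c t.2 then g t.1 else 0 :=
  Measurable.ite (measurable_snd MeasurableSet.of_discrete) (hg.comp measurable_fst)
    measurable_const

theorem integral_ite_one {β : Type*} [MeasurableSpace β] [DiscreteMeasurableSpace β]
    {P : Measure Ω} {Y : Ω → β} (hY : AEMeasurable Y P) (c : β → Prop) [DecidablePred c] :
    ∫ ω, (if c (Y ω) then (1 : ℝ) else 0) ∂P = (P {ω | c (Y ω)}).toReal := by
  have hs : NullMeasurableSet {ω | c (Y ω)} P :=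
    hY.nullMeasurableSet_preimage (s := {b | c b}) MeasurableSet.of_discrete
  have hind : (fun ω => if c (Y ω) then (1 : ℝ) else 0) = {ω | c (Y ω)}.indicator 1 := by
    ext ω
    simp [Set.indicator_apply]
  rw [hind, integral_indicator₀ hs]
  simp [measureReal_def]

section PlugIn

variable {p M q : ℕ} {P : Measure Ω} [IsProbabilityMeasure P]
  {X : Ω → Fin p → ℝ} {U : Ω → Fin M} {Z : Ω → Fin q}
  {Xs : ℕ → Ω → Fin p → ℝ} {Us : ℕ → Ω → Fin M} {Zs : ℕ → Ω → Fin q}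

theorem IsIIDSample.subrootConsistent_average (hiid : IsIIDSample P X U Z Xs Us Zs)
    {w : (Fin p → ℝ) × Fin M × Fin q → ℝ} (hw : Measurable w)
    (hL2 : MemLp (fun ω => w (X ω, U ω, Z ω)) 2 P) :
    SubrootConsistent P (fun n ω => (n : ℝ)⁻¹ * ∑ i ∈ range n, w (Xs i ω, Us i ω, Zs i ω))
      (∫ ω, w (X ω, U ω, Z ω) ∂P) := by
  obtain ⟨-, hindep, hident⟩ := hiid
  have hident0 : IdentDistrib (fun ω => w (Xs 0 ω, Us 0 ω, Zs 0 ω))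
      (fun ω => w (X ω, U ω, Z ω)) P P := (hident 0).comp hw
  rw [← hident0.integral_eq]
  exact subrootConsistent_average_of_identDistrib
    (fun i j hij => (hindep.indepFun hij).comp hw hw)
    (fun i => ((hident i).trans (hident 0).symm).comp hw) (hident0.memLp_iff.2 hL2)

theorem memLp_ite_of_abs_le_one_add_sum_sq (hXUZ : AEMeasurable (fun ω => (X ω, U ω, Z ω)) P)
    (hmom : Integrable (fun ω => (∑ i, X ω i ^ 2) ^ 2) P) (c : Fin M × Fin q → Prop)
    [DecidablePred c] {g : (Fin p → ℝ) → ℝ} (hg : Measurable g)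
    (hgle : ∀ x, |g x| ≤ 1 + ∑ k, x k ^ 2) :
    MemLp (fun ω => if c (U ω, Z ω) then g (X ω) else 0) 2 P := by
  have hX : AEMeasurable X P := hXUZ.fst
  have hsq : MemLp (fun ω => ∑ k, X ω k ^ 2) 2 P :=
    (memLp_two_iff_integrable_sq (by fun_prop)).2 hmom
  refine ((memLp_const (1 : ℝ)).add hsq).mono'
    ((measurable_ite_snd c hg).comp_aemeasurable hXUZ).aestronglyMeasurable
    (ae_of_all _ fun ω => ?_)
  have hs : 0 ≤ ∑ k, X ω k ^ 2 := sum_nonneg fun k _ => sq_nonneg _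
  split_ifs
  · exact hgle (X ω)
  · simp only [norm_zero, Pi.add_apply]
    positivity

theorem IsIIDSample.subrootConsistent_moment (hiid : IsIIDSample P X U Z Xs Us Zs)
    (hmom : Integrable (fun ω => (∑ i, X ω i ^ 2) ^ 2) P) (c : Fin M × Fin q → Prop)
    [DecidablePred c] {g : (Fin p → ℝ) → ℝ} (hg : Measurable g)
    (hgle : ∀ x, |g x| ≤ 1 + ∑ k, x k ^ 2) :
    SubrootConsistent P
      (fun n ω => (n : ℝ)⁻¹ * ∑ i ∈ range n, if c (Us i ω, Zs i ω) then g (Xs i ω) else 0)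
      (∫ ω, (if c (U ω, Z ω) then g (X ω) else 0) ∂P) :=
  hiid.subrootConsistent_average (w := fun t => if c t.2 then g t.1 else 0)
    (measurable_ite_snd c hg)
    (memLp_ite_of_abs_le_one_add_sum_sq (hiid.2.2 0).aemeasurable_snd hmom c hg hgle)

theorem IsIIDSample.subrootConsistent_conditionalMean (hiid : IsIIDSample P X U Z Xs Us Zs)
    (hmom : Integrable (fun ω => (∑ i, X ω i ^ 2) ^ 2) P) (c : Fin M × Fin q → Prop)
    [DecidablePred c] (hc : (P {ω | c (U ω, Z ω)}).toReal ≠ 0) {g : (Fin p → ℝ) → ℝ}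
    (hg : Measurable g) (hgle : ∀ x, |g x| ≤ 1 + ∑ k, x k ^ 2) :
    SubrootConsistent P
      (fun n ω => (∑ i ∈ range n, if c (Us i ω, Zs i ω) then (1 : ℝ) else 0)⁻¹ *
        ∑ i ∈ range n, if c (Us i ω, Zs i ω) then g (Xs i ω) else 0)
      ((P {ω | c (U ω, Z ω)}).toReal⁻¹ * ∫ ω, (if c (U ω, Z ω) then g (X ω) else 0) ∂P) := by
  have hprob := integral_ite_one (Y := fun ω => (U ω, Z ω)) (hiid.2.2 0).aemeasurable_snd.snd c
  have hcount := hiid.subrootConsistent_moment hmom c measurable_const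
    (g := fun _ => 1) fun x => by simpa using sum_nonneg fun k _ => sq_nonneg (x k)
  rw [hprob] at hcount
  refine ((hcount.inv hc).mul (hiid.subrootConsistent_moment hmom c hg hgle)).congr ?_ rfl
  filter_upwards [eventually_ne_atTop 0] with n hn ω
  field_simp

theorem IsIIDSample.subrootConsistent_pUhat (hiid : IsIIDSample P X U Z Xs Us Zs)
    (hmom : Integrable (fun ω => (∑ i, X ω i ^ 2) ^ 2) P) (m : Fin M) :
    SubrootConsistent P (pUhat Us m) (pU P U m) :=
  (hiid.subrootConsistent_moment hmom (fun t => t.1 = m) measurable_const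
    abs_one_le_one_add_sum_sq).congr (.of_forall fun _ _ => (div_eq_inv_mul _ _).symm)
    (integral_ite_one (Y := fun ω => (U ω, Z ω)) (hiid.2.2 0).aemeasurable_snd.snd (·.1 = m))

theorem IsIIDSample.subrootConsistent_NZU_div (hiid : IsIIDSample P X U Z Xs Us Zs)
    (hmom : Integrable (fun ω => (∑ i, X ω i ^ 2) ^ 2) P) (l : Fin q) (m : Fin M) :
    SubrootConsistent P (fun n ω => NZU Us Zs l m n ω / n) (pZU P U Z l m) :=
  (hiid.subrootConsistent_moment hmom (fun t => t.2 = l ∧ t.1 = m) measurable_const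
    abs_one_le_one_add_sum_sq).congr (.of_forall fun _ _ => (div_eq_inv_mul _ _).symm)
    (integral_ite_one (Y := fun ω => (U ω, Z ω)) (hiid.2.2 0).aemeasurable_snd.snd
      (fun t => t.2 = l ∧ t.1 = m))

theorem IsIIDSample.subrootConsistent_pcondhat (hiid : IsIIDSample P X U Z Xs Us Zs)
    (hmom : Integrable (fun ω => (∑ i, X ω i ^ 2) ^ 2) P) (hpU : ∀ m, 0 < pU P U m)
    (l : Fin q) (m : Fin M) :
    SubrootConsistent P (pcondhat Us Zs l m) (pcond P U Z l m) :=
  ((hiid.subrootConsistent_NZU_div hmom l m).div (hiid.subrootConsistent_pUhat hmom m)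
    (hpU m).ne').congr (by
      filter_upwards [eventually_ne_atTop 0] with n hn ω
      exact div_div_div_cancel_right₀ (Nat.cast_ne_zero.2 hn) _ _) rfl

theorem IsIIDSample.subrootConsistent_muUhat (hiid : IsIIDSample P X U Z Xs Us Zs)
    (hmom : Integrable (fun ω => (∑ i, X ω i ^ 2) ^ 2) P) (hpU : ∀ m, 0 < pU P U m) (m : Fin M)
    (a : Fin p) :
    SubrootConsistent P (fun n ω => muUhat Xs Us m n ω a) (muU P X U m a) :=
  hiid.subrootConsistent_conditionalMean hmom (·.1 = m) (hpU m).ne'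
    (g := fun x => x a) (measurable_pi_apply a) (abs_apply_le_one_add_sum_sq · a)

theorem IsIIDSample.subrootConsistent_muZUhat (hiid : IsIIDSample P X U Z Xs Us Zs)
    (hmom : Integrable (fun ω => (∑ i, X ω i ^ 2) ^ 2) P) (hpZU : ∀ l m, 0 < pZU P U Z l m)
    (l : Fin q) (m : Fin M) (a : Fin p) :
    SubrootConsistent P (fun n ω => muZUhat Xs Us Zs l m n ω a) (muZU P X U Z l m a) :=
  hiid.subrootConsistent_conditionalMean hmom (fun t => t.2 = l ∧ t.1 = m) (hpZU l m).ne'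
    (g := fun x => x a) (measurable_pi_apply a) (abs_apply_le_one_add_sum_sq · a)

theorem IsIIDSample.subrootConsistent_VUhat (hiid : IsIIDSample P X U Z Xs Us Zs)
    (hmom : Integrable (fun ω => (∑ i, X ω i ^ 2) ^ 2) P) (hpU : ∀ m, 0 < pU P U m) (m : Fin M) :
    MatrixSubrootConsistent P (VUhat Xs Us m) (VU P X U m) := by
  intro a b
  have hmean {g : (Fin p → ℝ) → ℝ} (hg : Measurable g) (hgle : ∀ x, |g x| ≤ 1 + ∑ k, x k ^ 2) :=
    hiid.subrootConsistent_conditionalMean hmom (·.1 = m) (hpU m).ne' hg hgle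
  have hint {g : (Fin p → ℝ) → ℝ} (hg : Measurable g) (hgle : ∀ x, |g x| ≤ 1 + ∑ k, x k ^ 2) :
      Integrable (fun ω => if U ω = m then g (X ω) else 0) P :=
    (memLp_ite_of_abs_le_one_add_sum_sq (hiid.2.2 0).aemeasurable_snd hmom (·.1 = m) hg
      hgle).integrable one_le_two
  have hxy : Measurable fun x : Fin p → ℝ => x a * x b := by fun_prop
  have hμa := hiid.subrootConsistent_muUhat hmom hpU m a
  have hμb := hiid.subrootConsistent_muUhat hmom hpU m b
  -- both covariances expand as `E[x y] - μa E[y] - μb E[x] + μa μb E[1]` given `U = m`; keeping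
  -- `E[1]` (rather than `1`) avoids a case split on an empty class in the sample
  refine ((((hmean hxy (abs_mul_apply_le_one_add_sum_sq · a b)).sub
    (hμa.mul (hmean (measurable_pi_apply b) (abs_apply_le_one_add_sum_sq · b)))).sub
    (hμb.mul (hmean (measurable_pi_apply a) (abs_apply_le_one_add_sum_sq · a)))).add
    ((hμa.mul hμb).mul (hmean measurable_const abs_one_le_one_add_sum_sq))).congr
    (.of_forall fun n ω => ?_) ?_
  · simp only [VUhat, NU, Matrix.of_apply, ite_mul_sub_mul_sub, sum_add_distrib, sum_sub_distrib,
      ← mul_sum]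
    ring
  · simp only [VU, Matrix.of_apply]
    rw [integral_ite_mul_sub_mul_sub _ _ (hint hxy (abs_mul_apply_le_one_add_sum_sq · a b))
      (hint (measurable_pi_apply a) (abs_apply_le_one_add_sum_sq · a))
      (hint (measurable_pi_apply b) (abs_apply_le_one_add_sum_sq · b))
      (hint measurable_const abs_one_le_one_add_sum_sq)]
    simp only [muU, pU]
    ring

theorem IsIIDSample.subrootConsistent_xiKmhat (hiid : IsIIDSample P X U Z Xs Us Zs)
    (hmom : Integrable (fun ω => (∑ i, X ω i ^ 2) ^ 2) P) (hpU : ∀ m, 0 < pU P U m)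
    (hpZU : ∀ l m, 0 < pZU P U Z l m) (hV : ∀ m, (VU P X U m).PosDef)
    (K : Finset (Fin p)) (m : Fin M) :
    SubrootConsistent P (xiKmhat Xs Us Zs K m) (xiKm P X U Z K m) := by
  have hVU := hiid.subrootConsistent_VUhat hmom hpU m
  have hproj := (MatrixSubrootConsistent.const P 1).sub
    (hVU.mul (hVU.QK K (posDef_AK_mul_mul_transpose (hV m) K).det_pos.ne'))
  exact SubrootConsistent.sum _ fun l _ =>
    ((hiid.subrootConsistent_pcondhat hmom hpU l m).pow 2).mul
      (SubrootConsistent.sum _ fun a _ => (hproj.mulVec (fun b =>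
        (hiid.subrootConsistent_muZUhat hmom hpZU l m b).sub
          (hiid.subrootConsistent_muUhat hmom hpU m b)) a).pow 2)

theorem IsIIDSample.subrootConsistent_xiKhat (hiid : IsIIDSample P X U Z Xs Us Zs)
    (hmom : Integrable (fun ω => (∑ i, X ω i ^ 2) ^ 2) P) (hpU : ∀ m, 0 < pU P U m)
    (hpZU : ∀ l m, 0 < pZU P U Z l m) (hV : ∀ m, (VU P X U m).PosDef) (K : Finset (Fin p)) :
    SubrootConsistent P (xiKhat Xs Us Zs K) (xiK P X U Z K) :=
  SubrootConsistent.sum _ fun m _ => ((hiid.subrootConsistent_pUhat hmom m).pow 2).mul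
    (hiid.subrootConsistent_xiKmhat hmom hpU hpZU hV K m)

end PlugIn

theorem stmt16_general
    {Ω : Type} [MeasurableSpace Ω] (P : Measure Ω) [IsProbabilityMeasure P]
    (p q M : ℕ)
    (X : Ω → Fin p → ℝ) (U : Ω → Fin M) (Z : Ω → Fin q)
    (hmom : Integrable (fun ω => (∑ i, X ω i ^ 2) ^ 2) P)
    (hpU : ∀ m, 0 < pU P U m) (hpZU : ∀ l m, 0 < pZU P U Z l m)
    (hV : ∀ m, (VU P X U m).PosDef)
    (σ : Equiv.Perm (Fin p))
    (Xs : ℕ → Ω → Fin p → ℝ) (Us : ℕ → Ω → Fin M) (Zs : ℕ → Ω → Fin q)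
    (hiid : IsIIDSample P X U Z Xs Us Zs)
    (alpha : ℝ) (halpha1 : alpha < 1 / 2)
    (i j : Fin p)
    (heq : xiK P X U Z (Kc (σ i)) = xiK P X U Z (Kc (σ j))) :
    TendstoInMeasure P
      (fun (n : ℕ) (ω : Ω) => (n : ℝ) ^ alpha *
        (xiKhat Xs Us Zs (Kc (σ i)) n ω - xiKhat Xs Us Zs (Kc (σ j)) n ω))
      atTop (fun _ => (0 : ℝ)) := by
  have h := (hiid.subrootConsistent_xiKhat hmom hpU hpZU hV (Kc (σ i))).sub
    (hiid.subrootConsistent_xiKhat hmom hpU hpZU hV (Kc (σ j))) alpha halpha1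
  simpa [heq] using h

/-- Proposition 2. -/
theorem stmt16
    {Ω : Type} [MeasurableSpace Ω] (P : Measure Ω) [IsProbabilityMeasure P]
    (p q M : ℕ) (hp : 1 ≤ p) (hq : 2 ≤ q) (hM : 1 ≤ M)
    (X : Ω → Fin p → ℝ) (U : Ω → Fin M) (Z : Ω → Fin q)
    (hX : Measurable X) (hU : Measurable U) (hZ : Measurable Z)
    (hmom : Integrable (fun ω => (∑ i, X ω i ^ 2) ^ 2) P)
    (hpU : ∀ m, 0 < pU P U m) (hpZU : ∀ l m, 0 < pZU P U Z l m)
    (hV : ∀ m, (VU P X U m).PosDef)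
    (hp2 : 2 ≤ p)
    (σ : Equiv.Perm (Fin p))
    (hsort : ∀ i j : Fin p, i ≤ j → xiK P X U Z (Kc (σ j)) ≤ xiK P X U Z (Kc (σ i)))
    (hties : ∀ i j : Fin p, i < j →
      xiK P X U Z (Kc (σ i)) = xiK P X U Z (Kc (σ j)) → σ i < σ j)
    (Xs : ℕ → Ω → Fin p → ℝ) (Us : ℕ → Ω → Fin M) (Zs : ℕ → Ω → Fin q)
    (hiid : IsIIDSample P X U Z Xs Us Zs)
    (alpha : ℝ) (halpha0 : 0 < alpha) (halpha1 : alpha < 1 / 2)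
    (i j : Fin p) (hij : (i : ℕ) + 1 = (j : ℕ))
    (heq : xiK P X U Z (Kc (σ i)) = xiK P X U Z (Kc (σ j))) :
    TendstoInMeasure P
      (fun (n : ℕ) (ω : Ω) => (n : ℝ) ^ alpha *
        (xiKhat Xs Us Zs (Kc (σ i)) n ω - xiKhat Xs Us Zs (Kc (σ j)) n ω))
      atTop (fun _ => (0 : ℝ)) :=
  stmt16_general P p q M X U Z hmom hpU hpZU hV σ Xs Us Zs hiid alpha halpha1 i j heq

end ArxivStmt
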